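/- arXiv:1107.2888 — 3 statements merged into one kernel-verified Lean document; each statement's English description precedes it below -/
import Mathlib

section
/- For every integer k ≥ 3 and all positive integers b and n with b dividing n, (min over 2-colorings c of Z_n of M_k(n,c))/n² ≤ (min over 2-colorings B of Z_b of M_k(b,B))/b². -/
/-- Number of monochromatic `k`-APs in `Z_n` under the 2-coloring `c`:
pairs `(a,d)` with `c a = c (a+d) = ⋯ = c (a+(k-1)d)`. -/
noncomputable def monoAPCount (n k : ℕ) (c : ZMod n → Fin 2) : ℕ :=
  Set.ncard {p : ZMod n × ZMod n | ∀ i < k, c (p.1 + i • p.2) = c p.1}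

/-- The minimum of `monoAPCount n k c` over all 2-colorings `c` of `Z_n`. -/
noncomputable def minMonoAPCount (n k : ℕ) : ℕ :=
  sInf {m : ℕ | ∃ c : ZMod n → Fin 2, monoAPCount n k c = m}

/-!
Pull a 2-coloring of `Z_b` back along the surjection `Z_n → Z_b`. The monochromatic `k`-APs of
the pulled-back coloring are the preimage of those of the original one under the surjective
homomorphism `Z_n² → Z_b²`, whose fibers all have the size of its kernel, `(n / b)²`. So both
colorings have the same density of monochromatic `k`-APs, and the minimum over `Z_n` can only
be smaller.
-/

theorem AddMonoidHom.ncard_preimage_of_surjective {G H : Type*} [AddGroup G] [AddGroup H]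
    (f : G →+ H) (hf : Function.Surjective f) (S : Set H) :
    (f ⁻¹' S).ncard = Nat.card f.ker * S.ncard := by
  let e := QuotientAddGroup.quotientKerEquivOfSurjective f hf
  have hpre : f ⁻¹' S = QuotientAddGroup.mk ⁻¹' (e ⁻¹' S) := rfl
  rw [hpre, ← Nat.card_coe_set_eq,
    Nat.card_congr (QuotientAddGroup.preimageMkEquivAddSubgroupProdSet _ _), Nat.card_prod,
    Nat.card_coe_set_eq,
    Set.ncard_preimage_of_injective_subset_range e.injective (by simp [e.surjective.range_eq])]

theorem AddMonoidHom.ncard_preimage_mul_card {G H : Type*} [AddGroup G] [AddGroup H]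
    (f : G →+ H) (hf : Function.Surjective f) (S : Set H) :
    (f ⁻¹' S).ncard * Nat.card H = Nat.card G * S.ncard := by
  have hG : Nat.card G = Nat.card f.ker * Nat.card H := by
    rw [← Set.ncard_univ, ← Set.preimage_univ (f := f), f.ncard_preimage_of_surjective hf,
      Set.ncard_univ]
  rw [f.ncard_preimage_of_surjective hf, hG]
  ring

theorem preimage_setOf_monochromatic {G H C : Type*} [AddMonoid G] [AddMonoid H]
    (φ : G →+ H) (c : H → C) (k : ℕ) :
    {p : G × G | ∀ i < k, c (φ (p.1 + i • p.2)) = c (φ p.1)} =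
      φ.prodMap φ ⁻¹' {q : H × H | ∀ i < k, c (q.1 + i • q.2) = c q.1} := by
  ext p
  simp [map_add, map_nsmul]

theorem monoAPCount_comp_castHom_mul {b n : ℕ} (h : b ∣ n) (k : ℕ) (c : ZMod b → Fin 2) :
    monoAPCount n k (c ∘ ZMod.castHom h (ZMod b)) * b ^ 2 = n ^ 2 * monoAPCount b k c := by
  let π : ZMod n →+ ZMod b := ZMod.castHom h (ZMod b)
  have hπ : Function.Surjective (π.prodMap π) :=
    Prod.map_surjective.2 ⟨ZMod.castHom_surjective h, ZMod.castHom_surjective h⟩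
  have := (π.prodMap π).ncard_preimage_mul_card hπ
    {q | ∀ i < k, c (q.1 + i • q.2) = c q.1}
  rw [← preimage_setOf_monochromatic] at this
  rwa [Nat.card_prod, Nat.card_zmod, ← sq, Nat.card_prod, Nat.card_zmod, ← sq] at this

theorem mk_dvd_upper_bound :
    ∀ k : ℕ, 3 ≤ k → ∀ b n : ℕ, 0 < b → 0 < n → b ∣ n →
      (minMonoAPCount n k : ℝ) / (n : ℝ) ^ 2 ≤ (minMonoAPCount b k : ℝ) / (b : ℝ) ^ 2 := by
  intro k _ b n hb hn hbn
  obtain ⟨c, hc⟩ : ∃ c : ZMod b → Fin 2, monoAPCount b k c = minMonoAPCount b k :=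
    Nat.sInf_mem (s := {m | ∃ c : ZMod b → Fin 2, monoAPCount b k c = m}) ⟨_, fun _ => 0, rfl⟩
  have hmin : minMonoAPCount n k ≤ monoAPCount n k (c ∘ ZMod.castHom hbn (ZMod b)) :=
    Nat.sInf_le ⟨_, rfl⟩
  have hcount : (monoAPCount n k (c ∘ ZMod.castHom hbn (ZMod b)) : ℝ) * (b : ℝ) ^ 2 =
      (n : ℝ) ^ 2 * monoAPCount b k c := by
    exact_mod_cast monoAPCount_comp_castHom_mul hbn k c
  rw [div_le_div_iff₀ (by positivity) (by positivity), ← hc]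
  calc (minMonoAPCount n k : ℝ) * (b : ℝ) ^ 2
      ≤ monoAPCount n k (c ∘ ZMod.castHom hbn (ZMod b)) * (b : ℝ) ^ 2 := by gcongr
    _ = monoAPCount b k c * (n : ℝ) ^ 2 := by rw [hcount, mul_comm]
end

section
/- For every ε > 0 there exists N such that for every integer n ≥ N there exists a 2-coloring c of Z_n with M_3(n,c) ≤ (1/4 + ε)·n². Together with the matching lower bound, this shows min_c M_3(n,c)/n² → 1/4 as n → ∞. -/
open Finset

section Colorings

variable {α β : Type*} [Fintype α] [DecidableEq α] [Fintype β] [DecidableEq β]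

theorem card_funs_const_on_le {S : Finset α} {x : α} (hx : x ∈ S) :
    #{c : α → β | ∀ u ∈ S, c u = c x} ≤ Fintype.card β ^ (Fintype.card α - (#S - 1)) := by
  calc #{c : α → β | ∀ u ∈ S, c u = c x}
      ≤ #(univ : Finset (((S.erase x)ᶜ : Finset α) → β)) := by
        refine card_le_card_of_injOn (fun c u => c u) (fun _ _ => mem_coe.2 (mem_univ _)) ?_
        intro c₁ h₁ c₂ h₂ h
        have off : ∀ u ∉ S.erase x, c₁ u = c₂ u := fun u hu => congrFun h ⟨u, mem_compl.2 hu⟩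
        have hcx : c₁ x = c₂ x := off x (notMem_erase x S)
        replace h₁ := (mem_filter.1 h₁).2
        replace h₂ := (mem_filter.1 h₂).2
        funext u
        by_cases hu : u ∈ S.erase x
        · rw [h₁ u (mem_of_mem_erase hu), h₂ u (mem_of_mem_erase hu), hcx]
        · exact off u hu
    _ = Fintype.card β ^ (Fintype.card α - (#S - 1)) := by
      rw [card_univ, Fintype.card_fun, Fintype.card_coe, card_compl, card_erase_of_mem hx]

theorem card_threeAP_eq_three {G : Type*} [AddLeftCancelMonoid G] [DecidableEq G]
    {a d : G} (hd : 2 • d ≠ 0) : #{a, a + d, a + 2 • d} = 3 := by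
  have hd₀ : d ≠ 0 := fun h => hd (by rw [h, smul_zero])
  rw [card_insert_of_notMem, card_pair]
  · rw [two_nsmul, Ne, add_right_inj, left_eq_add]
    exact hd₀
  · simp only [mem_insert, mem_singleton, not_or]
    exact ⟨by simpa using hd₀, by simpa using hd⟩

theorem card_colorings_mono_threeAP_le {G : Type*} [AddLeftCancelMonoid G] [Fintype G]
    [DecidableEq G] {a d : G} (hd : 2 • d ≠ 0) :
    #{c : G → β | ∀ i < 3, c (a + i • d) = c a} ≤ Fintype.card β ^ (Fintype.card G - 2) := by
  have hAP : ∀ c : G → β, (∀ i < 3, c (a + i • d) = c a) ↔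
      ∀ u ∈ ({a, a + d, a + 2 • d} : Finset G), c u = c a := by
    intro c
    simp only [mem_insert, mem_singleton, forall_eq_or_imp, forall_eq, true_and]
    constructor
    · intro h
      exact ⟨by simpa using h 1 (by norm_num), h 2 (by norm_num)⟩
    · rintro ⟨h₁, h₂⟩ i hi
      interval_cases i <;> simp [h₁, h₂]
  simp_rw [hAP]
  have := card_funs_const_on_le (β := β) (mem_insert_self a {a + d, a + 2 • d})
  rwa [card_threeAP_eq_three hd] at this

end Colorings

section Cyclic

variable {G β : Type*} [AddCommGroup G] [IsAddCyclic G] [Fintype G] [DecidableEq G]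
  [Fintype β] [DecidableEq β]

theorem card_filter_two_nsmul_snd_eq_zero_le :
    #{p : G × G | 2 • p.2 = 0} ≤ 2 * Fintype.card G := by
  rw [← univ_product_univ, filter_product_right (fun d : G => 2 • d = 0), card_product,
    card_univ, mul_comm]
  exact Nat.mul_le_mul_right _ (IsAddCyclic.card_nsmul_eq_zero_le two_pos)

theorem sum_card_monoThreeAP_le :
    ∑ c : G → β, #{p : G × G | ∀ i < 3, c (p.1 + i • p.2) = c p.1} ≤
      Fintype.card G ^ 2 * Fintype.card β ^ (Fintype.card G - 2) +
        2 * Fintype.card G * Fintype.card β ^ Fintype.card G := by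
  calc ∑ c : G → β, #{p : G × G | ∀ i < 3, c (p.1 + i • p.2) = c p.1}
      = ∑ p : G × G, #{c : G → β | ∀ i < 3, c (p.1 + i • p.2) = c p.1} := by
        simp only [card_filter]
        exact sum_comm
    _ ≤ ∑ p : G × G, (Fintype.card β ^ (Fintype.card G - 2) +
          if 2 • p.2 = 0 then Fintype.card β ^ Fintype.card G else 0) := by
        refine sum_le_sum fun p _ => ?_
        split_ifs with hd
        · refine (card_filter_le _ _).trans ?_
          rw [card_univ, Fintype.card_fun]
          exact Nat.le_add_left _ _
        · exact card_colorings_mono_threeAP_le hd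
    _ = Fintype.card G ^ 2 * Fintype.card β ^ (Fintype.card G - 2) +
          #{p : G × G | 2 • p.2 = 0} * Fintype.card β ^ Fintype.card G := by
        rw [sum_add_distrib, sum_const, sum_ite, sum_const, sum_const_zero, card_univ,
          Fintype.card_prod, smul_eq_mul, smul_eq_mul, add_zero, sq]
    _ ≤ _ := by
        gcongr
        exact card_filter_two_nsmul_snd_eq_zero_le

theorem exists_coloring_card_monoThreeAP_le [Nonempty β] (hG : 2 ≤ Fintype.card G) :
    ∃ c : G → β, #{p : G × G | ∀ i < 3, c (p.1 + i • p.2) = c p.1} * Fintype.card β ^ 2 ≤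
      Fintype.card G ^ 2 + 2 * Fintype.card G * Fintype.card β ^ 2 := by
  suffices h : ∑ c : G → β,
      #{p : G × G | ∀ i < 3, c (p.1 + i • p.2) = c p.1} * Fintype.card β ^ 2 ≤
      ∑ _c : G → β, (Fintype.card G ^ 2 + 2 * Fintype.card G * Fintype.card β ^ 2) by
    obtain ⟨c, -, hc⟩ := exists_le_of_sum_le univ_nonempty h
    exact ⟨c, hc⟩
  calc ∑ c : G → β, #{p : G × G | ∀ i < 3, c (p.1 + i • p.2) = c p.1} * Fintype.card β ^ 2
      ≤ (Fintype.card G ^ 2 * Fintype.card β ^ (Fintype.card G - 2) +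
          2 * Fintype.card G * Fintype.card β ^ Fintype.card G) * Fintype.card β ^ 2 := by
        rw [← sum_mul]
        gcongr
        exact sum_card_monoThreeAP_le
    _ = _ := by
        rw [sum_const, card_univ, Fintype.card_fun, smul_eq_mul, ← pow_sub_mul_pow _ hG]
        ring

end Cyclic

theorem monoAPCount_eq_card (n k : ℕ) [NeZero n] (c : ZMod n → Fin 2) :
    monoAPCount n k c = #{p : ZMod n × ZMod n | ∀ i < k, c (p.1 + i • p.2) = c p.1} := by
  rw [monoAPCount, ← Set.ncard_coe_finset, coe_filter_univ]

theorem m3_upper_bound :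
    ∀ ε : ℝ, 0 < ε → ∃ N : ℕ, ∀ n : ℕ, N ≤ n →
      ∃ c : ZMod n → Fin 2, (monoAPCount n 3 c : ℝ) ≤ (1 / 4 + ε) * (n : ℝ) ^ 2 := by
  intro ε hε
  refine ⟨⌈2 / ε⌉₊ + 2, fun n hn => ?_⟩
  have : NeZero n := ⟨by omega⟩
  obtain ⟨c, hc⟩ :=
    exists_coloring_card_monoThreeAP_le (G := ZMod n) (β := Fin 2) (by rw [ZMod.card]; omega)
  rw [ZMod.card, Fintype.card_fin, ← monoAPCount_eq_card] at hc
  have hc' : (monoAPCount n 3 c : ℝ) * 2 ^ 2 ≤ n ^ 2 + 2 * n * 2 ^ 2 := by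
    exact_mod_cast hc
  have hεn : 2 ≤ ε * n := by
    have : 2 / ε ≤ n := (Nat.le_ceil _).trans (by exact_mod_cast (Nat.le_add_right _ 2).trans hn)
    rwa [div_le_iff₀ hε, mul_comm] at this
  exact ⟨c, by nlinarith⟩
end

section
/- For every integer t ≥ 2, (min over 2-colorings c of Z_{11t} of M_4(11t, c)) ≤ 10·t² + (min over 2-colorings c' of Z_t of M_4(t, c')). Equivalently, m_4(Z_{11t}) ≤ (10 + m_4(Z_t))/121, where m_4(Z_n) = (min_c M_4(n,c))/n². -/
namespace ZMod

variable (m t : ℕ)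

/-- `y ↦ m * y`, identifying `Z_t` with the subgroup `m Z_{mt}`. -/
def scaleHom : ZMod t →+ ZMod (m * t) :=
  ZMod.lift t ⟨zmultiplesHom _ (m : ZMod (m * t)), by
    simp [mul_comm, ← Nat.cast_mul]⟩

variable {m t}

theorem scaleHom_intCast (k : ℤ) : scaleHom m t k = (m * k : ZMod (m * t)) := by
  simp [scaleHom, ZMod.lift_coe, mul_comm]

theorem scaleHom_injective [NeZero m] : Function.Injective (scaleHom m t) := by
  refine (injective_iff_map_eq_zero _).2 fun y hy => ?_
  rw [← ZMod.intCast_zmod_cast y, scaleHom_intCast, ← Int.cast_natCast, ← Int.cast_mul,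
    ZMod.intCast_zmod_eq_zero_iff_dvd, Nat.cast_mul] at hy
  rw [← ZMod.intCast_zmod_cast y, ZMod.intCast_zmod_eq_zero_iff_dvd]
  exact (mul_dvd_mul_iff_left (by exact_mod_cast NeZero.ne m)).1 hy

theorem castHom_eq_zero_iff_mem_range (x : ZMod (m * t)) :
    castHom (dvd_mul_right m t) (ZMod m) x = 0 ↔ x ∈ Set.range (scaleHom m t) := by
  constructor
  · intro hx
    rw [← ZMod.intCast_zmod_cast x, map_intCast, ZMod.intCast_zmod_eq_zero_iff_dvd] at hx
    obtain ⟨k, hk⟩ := hx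
    refine ⟨k, ?_⟩
    rw [scaleHom_intCast, ← ZMod.intCast_zmod_cast x, hk]
    push_cast; rfl
  · rintro ⟨y, rfl⟩
    rw [← ZMod.intCast_zmod_cast y, scaleHom_intCast, map_mul, map_natCast, map_intCast,
      ZMod.natCast_self, zero_mul]

theorem ncard_castHom_eq_zero [NeZero m] :
    {x : ZMod (m * t) | castHom (dvd_mul_right m t) (ZMod m) x = 0}.ncard = t := by
  simp_rw [castHom_eq_zero_iff_mem_range, Set.ofPred_mem_eq,
    Set.ncard_range_of_injective scaleHom_injective, Nat.card_zmod]

theorem ncard_castHom_ne_zero [NeZero m] [NeZero t] :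
    {x : ZMod (m * t) | castHom (dvd_mul_right m t) (ZMod m) x ≠ 0}.ncard = (m - 1) * t := by
  rw [← Set.compl_ofPred, Set.ncard_compl, ncard_castHom_eq_zero, Nat.card_zmod, Nat.sub_one_mul]

end ZMod

open ZMod

def monoAPSet (n k : ℕ) (c : ZMod n → Fin 2) : Set (ZMod n × ZMod n) :=
  {p | ∀ i < k, c (p.1 + i • p.2) = c p.1}

theorem monoAPCount_eq_ncard (n k : ℕ) (c : ZMod n → Fin 2) :
    monoAPCount n k c = (monoAPSet n k c).ncard := rfl

theorem minMonoAPCount_le_monoAPCount (n k : ℕ) (c : ZMod n → Fin 2) :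
    minMonoAPCount n k ≤ monoAPCount n k c :=
  Nat.sInf_le ⟨c, rfl⟩

theorem exists_monoAPCount_eq_minMonoAPCount (n k : ℕ) :
    ∃ c : ZMod n → Fin 2, monoAPCount n k c = minMonoAPCount n k :=
  Nat.sInf_mem (s := {m | ∃ c : ZMod n → Fin 2, monoAPCount n k c = m}) ⟨_, fun _ => 0, rfl⟩

def NoMonochromaticAPOffZero {m : ℕ} (k : ℕ) (b : ZMod m → Fin 2) : Prop :=
  ∀ a d : ZMod m, d ≠ 0 → ∃ i < k, ∃ j < k,
    a + i • d ≠ 0 ∧ a + j • d ≠ 0 ∧ b (a + i • d) ≠ b (a + j • d)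

def coloringZMod11 : ZMod 11 → Fin 2 := ![0, 0, 1, 0, 0, 0, 1, 1, 1, 0, 1]

theorem noMonochromaticAPOffZero_coloringZMod11 :
    NoMonochromaticAPOffZero 4 coloringZMod11 := by
  unfold NoMonochromaticAPOffZero
  decide

section BlowUp

variable {m t : ℕ}

noncomputable def blowUpColoring (b : ZMod m → Fin 2) (c : ZMod t → Fin 2) :
    ZMod (m * t) → Fin 2 :=
  Function.extend (scaleHom m t) c (b ∘ castHom (dvd_mul_right m t) (ZMod m))

theorem blowUpColoring_scaleHom [NeZero m] (b : ZMod m → Fin 2) (c : ZMod t → Fin 2)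
    (y : ZMod t) : blowUpColoring b c (scaleHom m t y) = c y :=
  scaleHom_injective.extend_apply _ _ _

theorem blowUpColoring_of_castHom_ne_zero (b : ZMod m → Fin 2) (c : ZMod t → Fin 2)
    {x : ZMod (m * t)} (hx : castHom (dvd_mul_right m t) (ZMod m) x ≠ 0) :
    blowUpColoring b c x = b (castHom (dvd_mul_right m t) (ZMod m) x) :=
  Function.extend_apply' _ _ _ fun h => hx ((castHom_eq_zero_iff_mem_range x).2 h)

theorem monoAPSet_blowUpColoring_subset [NeZero m] {k : ℕ} {b : ZMod m → Fin 2}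
    (hb : NoMonochromaticAPOffZero k b) (c : ZMod t → Fin 2) :
    monoAPSet (m * t) k (blowUpColoring b c) ⊆
      Prod.map (scaleHom m t) (scaleHom m t) '' monoAPSet t k c ∪
        {x | castHom (dvd_mul_right m t) (ZMod m) x ≠ 0} ×ˢ
          {x | castHom (dvd_mul_right m t) (ZMod m) x = 0} := by
  set π := castHom (dvd_mul_right m t) (ZMod m)
  rintro ⟨a, d⟩ hmono
  by_cases hd : π d = 0
  · by_cases ha : π a = 0
    · left
      obtain ⟨a', rfl⟩ := (castHom_eq_zero_iff_mem_range a).1 ha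
      obtain ⟨d', rfl⟩ := (castHom_eq_zero_iff_mem_range d).1 hd
      refine ⟨(a', d'), fun i hi => ?_, rfl⟩
      simpa only [← map_nsmul, ← map_add, blowUpColoring_scaleHom] using hmono i hi
    · exact Or.inr ⟨ha, hd⟩
  · obtain ⟨i, hi, j, hj, hi0, hj0, hij⟩ := hb (π a) (π d) hd
    have hterm : ∀ l, π (a + l • d) ≠ 0 → blowUpColoring b c (a + l • d) = b (π a + l • π d) :=
      fun l hl => by rw [blowUpColoring_of_castHom_ne_zero b c hl, map_add, map_nsmul]
    refine absurd ?_ hij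
    rw [← hterm i (by simpa using hi0), ← hterm j (by simpa using hj0), hmono i hi, hmono j hj]

theorem monoAPCount_blowUpColoring_le [NeZero m] [NeZero t] {k : ℕ} {b : ZMod m → Fin 2}
    (hb : NoMonochromaticAPOffZero k b) (c : ZMod t → Fin 2) :
    monoAPCount (m * t) k (blowUpColoring b c) ≤ (m - 1) * t ^ 2 + monoAPCount t k c := by
  rw [monoAPCount_eq_ncard, monoAPCount_eq_ncard]
  calc _ ≤ _ := Set.ncard_le_ncard (monoAPSet_blowUpColoring_subset hb c)
    _ ≤ _ := Set.ncard_union_le _ _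
    _ ≤ (monoAPSet t k c).ncard + (m - 1) * t * t := by
      rw [Set.ncard_prod, ncard_castHom_ne_zero, ncard_castHom_eq_zero]
      gcongr
      exact Set.ncard_image_le
    _ = _ := by ring

theorem minMonoAPCount_mul_le [NeZero m] [NeZero t] {k : ℕ} {b : ZMod m → Fin 2}
    (hb : NoMonochromaticAPOffZero k b) :
    minMonoAPCount (m * t) k ≤ (m - 1) * t ^ 2 + minMonoAPCount t k := by
  obtain ⟨c, hc⟩ := exists_monoAPCount_eq_minMonoAPCount t k
  calc _ ≤ monoAPCount (m * t) k (blowUpColoring b c) := minMonoAPCount_le_monoAPCount _ _ _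
    _ ≤ _ := hc ▸ monoAPCount_blowUpColoring_le hb c

end BlowUp

theorem m4_recursive_11 :
    ∀ t : ℕ, 2 ≤ t →
      minMonoAPCount (11 * t) 4 ≤ 10 * t ^ 2 + minMonoAPCount t 4 := by
  intro t ht
  have : NeZero t := ⟨by omega⟩
  exact (minMonoAPCount_mul_le noMonochromaticAPOffZero_coloringZMod11).trans_eq (by norm_num)
end
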